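/- Let H : ℍ₂ → ℂ², H(z₁,z₂) = (-1/z₁, z₂/(2z₁²)). Then for all z = (z₁, z₂) ∈ ℍ₂, writing z₁ = x + iy and u = u_{ℍ₂}(z) = -y + |z₂|², the squared Bergman norm satisfies u⁴·‖H(z)‖²_{ℍ₂,z} = (y - |z₂|²)²·(x² + y² + 3|z₂|²y)/(x²+y²)² ≤ 4; hence ‖H(z)‖_{ℍ₂,z} ≤ 2/u_{ℍ₂}(z)². -/

import Mathlib

/-!
The Bergman form is real: its off-diagonal terms add up to `2i(a - ā) = -4 Im a` with
`a = z₂ w₁ w̄₂`. For `w = H(z)` one has `|w₁|² = 1/|z₁|²`, `|w₂|² = |z₂|²/(4|z₁|⁴)` and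
`Im a = -|z₂|² Im z₁/(2|z₁|⁴)`, so `u²‖H(z)‖² = (|z₁|² + 3|z₂|² Im z₁)/|z₁|⁴`. The bound `4`
comes from `(y - |z₂|²)² ≤ y² ≤ |z₁|²` and `3|z₂|² y ≤ 3|z₁|²`.
-/

open Complex

/-- The squared Bergman norm `wᵀ(g_{j,k})w̄` at `z ∈ ℍ₂`, with `u = -Im z₁ + |z₂|²`,
`g_{1,1} = 1/u²`, `g_{1,2} = 2iz₂/u²`, `g_{2,1} = -2iz̄₂/u²`, `g_{2,2} = 4 Im z₁/u²`. -/
noncomputable def bergNormSq2 (z w : ℂ × ℂ) : ℂ :=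
  let u : ℂ := ((-z.1.im + ‖z.2‖ ^ 2 : ℝ) : ℂ)
  (1 / u ^ 2) * (w.1 * (starRingEnd ℂ) w.1)
    + (2 * I * z.2 / u ^ 2) * (w.1 * (starRingEnd ℂ) w.2)
    + (-(2 * I * (starRingEnd ℂ) z.2) / u ^ 2) * (w.2 * (starRingEnd ℂ) w.1)
    + ((4 * z.1.im : ℝ) / u ^ 2) * (w.2 * (starRingEnd ℂ) w.2)

open scoped ComplexConjugate

theorem bergNormSq2_eq_ofReal (z w : ℂ × ℂ) :
    bergNormSq2 z w = (((‖w.1‖ ^ 2 - 4 * (z.2 * w.1 * conj w.2).im + 4 * z.1.im * ‖w.2‖ ^ 2)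
      / (-z.1.im + ‖z.2‖ ^ 2) ^ 2 : ℝ) : ℂ) := by
  have hcross := sub_conj (z.2 * w.1 * conj w.2)
  simp only [map_mul, conj_conj] at hcross
  unfold bergNormSq2
  simp only [mul_conj']
  push_cast at hcross ⊢
  set u : ℂ := -(z.1.im : ℂ) + ‖z.2‖ ^ 2
  linear_combination (2 * I / u ^ 2) * hcross
    + (4 * ((z.2 * w.1 * conj w.2).im : ℂ) / u ^ 2) * I_sq

theorem bergNormSq2_inversion (z : ℂ × ℂ) (hz : z.1 ≠ 0) :
    bergNormSq2 z (-1 / z.1, z.2 / (2 * z.1 ^ 2))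
      = (((‖z.1‖ ^ 2 + 3 * ‖z.2‖ ^ 2 * z.1.im) / (‖z.1‖ ^ 4 * (-z.1.im + ‖z.2‖ ^ 2) ^ 2) : ℝ)
          : ℂ) := by
  have hN : ‖z.1‖ ≠ 0 := norm_ne_zero_iff.mpr hz
  have hcross : z.2 * (-1 / z.1) * conj (z.2 / (2 * z.1 ^ 2))
      = ((-‖z.2‖ ^ 2 / (2 * ‖z.1‖ ^ 4) : ℝ) : ℂ) * z.1 := by
    have h1 := mul_conj' z.1
    have h2 := mul_conj' z.2
    have hc : conj z.1 ≠ 0 := (map_ne_zero _).mpr hz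
    have hN' : (‖z.1‖ : ℂ) ≠ 0 := by exact_mod_cast hN
    simp only [map_div₀, map_mul, map_pow, map_ofNat]
    push_cast
    field_simp
    linear_combination -(‖z.1‖ : ℂ) ^ 4 * h2
      + (‖z.2‖ : ℂ) ^ 2 * (z.1 * conj z.1 + (‖z.1‖ : ℂ) ^ 2) * h1
  rw [bergNormSq2_eq_ofReal, hcross, im_ofReal_mul]
  simp only [norm_div, norm_neg, norm_one, norm_mul, norm_pow, norm_ofNat]
  congr 1
  field_simp
  ring

theorem sub_sq_mul_div_sq_le_four (x : ℝ) {y r : ℝ} (hr : 0 ≤ r) (hry : r ≤ y) :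
    (y - r) ^ 2 * (x ^ 2 + y ^ 2 + 3 * r * y) / (x ^ 2 + y ^ 2) ^ 2 ≤ 4 := by
  have hsq : (y - r) ^ 2 ≤ x ^ 2 + y ^ 2 := by nlinarith
  have hsum : x ^ 2 + y ^ 2 + 3 * r * y ≤ 4 * (x ^ 2 + y ^ 2) := by nlinarith
  refine div_le_of_le_mul₀ (by positivity) (by norm_num) ?_
  calc (y - r) ^ 2 * (x ^ 2 + y ^ 2 + 3 * r * y)
      ≤ (x ^ 2 + y ^ 2) * (4 * (x ^ 2 + y ^ 2)) :=
        mul_le_mul hsq hsum (by nlinarith) (by positivity)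
    _ = 4 * (x ^ 2 + y ^ 2) ^ 2 := by ring

theorem sqrt_div_pow_four_le {a u : ℝ} (ha : a ≤ 4) : √(a / u ^ 4) ≤ 2 / u ^ 2 :=
  calc √(a / u ^ 4) ≤ √(4 / u ^ 4) := Real.sqrt_le_sqrt (by gcongr)
    _ = 2 / u ^ 2 := by
      rw [show (4 : ℝ) / u ^ 4 = (2 / u ^ 2) ^ 2 by ring, Real.sqrt_sq (by positivity)]

/-- For `H(z₁,z₂) = (-1/z₁, z₂/(2z₁²))` on `ℍ₂`, writing `z₁ = x + iy` and
`u = -y + |z₂|²`, one has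
`u⁴·‖H(z)‖²_{ℍ₂,z} = (y - |z₂|²)²(x² + y² + 3|z₂|²y)/(x²+y²)² ≤ 4`, hence
`‖H(z)‖_{ℍ₂,z} ≤ 2/u²`. -/
theorem bergman_bound_example (z : ℂ × ℂ) (hz : ‖z.2‖ ^ 2 < z.1.im) :
    (((-z.1.im + ‖z.2‖ ^ 2 : ℝ) : ℂ) ^ 4
        * bergNormSq2 z (-1 / z.1, z.2 / (2 * z.1 ^ 2))
      = (((z.1.im - ‖z.2‖ ^ 2) ^ 2
          * (z.1.re ^ 2 + z.1.im ^ 2 + 3 * ‖z.2‖ ^ 2 * z.1.im)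
          / (z.1.re ^ 2 + z.1.im ^ 2) ^ 2 : ℝ) : ℂ)) ∧
    (z.1.im - ‖z.2‖ ^ 2) ^ 2
        * (z.1.re ^ 2 + z.1.im ^ 2 + 3 * ‖z.2‖ ^ 2 * z.1.im)
        / (z.1.re ^ 2 + z.1.im ^ 2) ^ 2 ≤ 4 ∧
    Real.sqrt (bergNormSq2 z (-1 / z.1, z.2 / (2 * z.1 ^ 2))).re
      ≤ 2 / (-z.1.im + ‖z.2‖ ^ 2) ^ 2 := by
  have hr : 0 ≤ ‖z.2‖ ^ 2 := by positivity
  have hz1 : z.1 ≠ 0 := fun h => by simp [h] at hz; linarith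
  have hu : -z.1.im + ‖z.2‖ ^ 2 ≠ 0 := by linarith
  have hnorm : ‖z.1‖ ^ 2 = z.1.re ^ 2 + z.1.im ^ 2 := by
    rw [Complex.sq_norm, normSq_apply]; ring
  set K := (z.1.im - ‖z.2‖ ^ 2) ^ 2 * (z.1.re ^ 2 + z.1.im ^ 2 + 3 * ‖z.2‖ ^ 2 * z.1.im)
    / (z.1.re ^ 2 + z.1.im ^ 2) ^ 2
  have hK : K ≤ 4 := sub_sq_mul_div_sq_le_four z.1.re hr hz.le
  have hval : bergNormSq2 z (-1 / z.1, z.2 / (2 * z.1 ^ 2))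
      = ((K / (-z.1.im + ‖z.2‖ ^ 2) ^ 4 : ℝ) : ℂ) := by
    rw [bergNormSq2_inversion z hz1, show ‖z.1‖ ^ 4 = (‖z.1‖ ^ 2) ^ 2 by ring, hnorm]
    congr 1
    field_simp
    ring
  refine ⟨?_, hK, ?_⟩
  · rw [hval, ← ofReal_pow, ← ofReal_mul, mul_div_cancel₀ _ (pow_ne_zero 4 hu)]
  · rw [hval, ofReal_re]
    exact sqrt_div_pow_four_le hK
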